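/- For any a, b ∈ N with Hamming distance d(a,b) ≥ 2 and any i ∈ [n] with a_i ≠ b_i, there exists a path c_0 = a, c_1, …, c_l in N with l = d(a,b) − 2 such that d(c_{j-1}, c_j) = 1 for each j, c_{j-1} and c_j never differ in component i, d(c_l, b) = 2, and no two distinct c_j, c_h are s-equivalent (so the corresponding variables are pairwise distinct). -/

import Mathlib

/-!
Let `t₁, …, t_{d-1}` enumerate the components other than `i` in which `a` and `b` differ, and let
`c_j` agree with `b` at `t₁, …, t_j` and with `a` elsewhere. Consecutive members differ only at
`t_{j+1}`, and `c_{d-2}` differs from `b` only at `i` and `t_{d-1}`. For `j < h`, `c_h ≤ c_j` in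
each of the first `s` components (as `b ≤ a` there) while `c_j` and `c_h` differ at `t_{j+1}`:
either the sums of the first `s` components differ, or a component beyond `s` does.
-/

open Finset

/-- The set of indices: `a i` (a value in `Fin (r i)`) represents the entry `a_i = (a i) + 1`
of an index in `[r 1] × ⋯ × [r n]`.  So `0` corresponds to the entry `1` and `r i - 1`
to the entry `r i`. -/
abbrev Idx (n : ℕ) (r : Fin n → ℕ) := ∀ i : Fin n, Fin (r i)

/-- `a` and `b` are `s`-equivalent: equal sums of the first `s` components and equal
remaining components. -/
def sEquiv (n s : ℕ) (r : Fin n → ℕ) (a b : Idx n r) : Prop :=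
  (∑ i ∈ Finset.univ.filter (fun i : Fin n => (i : ℕ) < s), (a i : ℕ)) =
    (∑ i ∈ Finset.univ.filter (fun i : Fin n => (i : ℕ) < s), (b i : ℕ)) ∧
  ∀ i : Fin n, s ≤ (i : ℕ) → a i = b i

/-- The switch of `a` and `b` with respect to a single component `i`. -/
def sw {n : ℕ} {r : Fin n → ℕ} (i : Fin n) (a b : Idx n r) : Idx n r :=
  fun j => if j = i then b j else a j

/-- The switch of `a` and `b` with respect to a set `L` of components. -/
def swL {n : ℕ} {r : Fin n → ℕ} (L : Finset (Fin n)) (a b : Idx n r) : Idx n r :=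
  fun j => if j ∈ L then b j else a j

/-- An `(s,t)`-switchable subset of the set of indices. -/
def Switchable (n s t : ℕ) (r : Fin n → ℕ) (S : Set (Idx n r)) : Prop :=
  (∀ a b, a ∈ S → b ∈ S → hammingDist a b = 2 →
    ∀ i : Fin n, (i : ℕ) < t → sw i a b ∈ S) ∧
  (∀ a b, a ∈ S → sEquiv n s r a b → b ∈ S)

/-- `c 0, c 1, …, c k` is a path in `S`: all members lie in `S` and consecutive members
have Hamming distance `1`. -/
def IsPathIn {n : ℕ} {r : Fin n → ℕ} (S : Set (Idx n r)) (c : ℕ → Idx n r) (k : ℕ) : Prop :=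
  (∀ j ≤ k, c j ∈ S) ∧ ∀ j < k, hammingDist (c j) (c (j + 1)) = 1

/-- `a` and `b` are connected in `S`. -/
def ConnectedIn {n : ℕ} {r : Fin n → ℕ} (S : Set (Idx n r)) (a b : Idx n r) : Prop :=
  ∃ k c, c 0 = a ∧ c k = b ∧ IsPathIn S c k

theorem exists_monotone_subsets_card_eq {α : Type*} (D : Finset α) :
    ∃ L : ℕ → Finset α, Monotone L ∧ (∀ j, L j ⊆ D) ∧ ∀ j ≤ #D, #(L j) = j := by
  classical
  refine ⟨fun j => (D.toList.take j).toFinset, fun j h hjh => ?_, fun j => ?_, fun j hj => ?_⟩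
  · exact fun x hx =>
      List.mem_toFinset.2 ((List.take_prefix_take_left hjh).subset (List.mem_toFinset.1 hx))
  · exact fun x hx => mem_toList.1 (List.take_subset j _ (List.mem_toFinset.1 hx))
  · rw [List.toFinset_card_of_nodup (D.nodup_toList.sublist (List.take_sublist j _))]
    simpa using hj

theorem sEquiv.symm {n s : ℕ} {r : Fin n → ℕ} {a b : Idx n r} (h : sEquiv n s r a b) :
    sEquiv n s r b a :=
  ⟨h.1.symm, fun t ht => (h.2 t ht).symm⟩

section swL

variable {n : ℕ} {r : Fin n → ℕ} {a b : Idx n r}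

theorem swL_empty : swL ∅ a b = a := by
  funext t
  simp [swL]

theorem swL_filter_ne : swL ({t | a t ≠ b t} : Finset (Fin n)) a b = b := by
  funext t
  by_cases h : a t = b t <;> simp [swL, h]

theorem swL_apply_of_notMem {L : Finset (Fin n)} {t : Fin n} (ht : t ∉ L) :
    swL L a b t = a t :=
  if_neg ht

theorem hammingDist_swL_swL {L L' : Finset (Fin n)} (hLL' : L ⊆ L')
    (hL' : ∀ t ∈ L', a t ≠ b t) :
    hammingDist (swL L a b) (swL L' a b) = #L' - #L := by
  rw [← card_sdiff_of_subset hLL', hammingDist]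
  congr 1
  ext t
  simp only [mem_filter, mem_univ, true_and, mem_sdiff]
  by_cases htL : t ∈ L
  · simp [swL, htL, hLL' htL]
  · by_cases htL' : t ∈ L'
    · simpa [swL, htL, htL'] using hL' t htL'
    · simp [swL, htL, htL']

theorem not_sEquiv_swL_of_ssubset {s : ℕ}
    (hab : ∀ j : Fin n, (j : ℕ) < s → (b j : ℕ) ≤ (a j : ℕ))
    {L L' : Finset (Fin n)} (hLL' : L ⊂ L') (hL' : ∀ t ∈ L', a t ≠ b t) :
    ¬ sEquiv n s r (swL L a b) (swL L' a b) := by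
  rintro ⟨hsum, htail⟩
  obtain ⟨t, htL', htL⟩ := exists_of_ssubset hLL'
  have hne := hL' t htL'
  have hL't : swL L' a b t = b t := if_pos htL'
  have hLt : swL L a b t = a t := if_neg htL
  by_cases hts : (t : ℕ) < s
  · refine hsum.not_gt (sum_lt_sum (fun u hu => ?_) ⟨t, by simpa using hts, ?_⟩)
    · have hus : (u : ℕ) < s := by simpa using hu
      by_cases huL : u ∈ L
      · simp [swL, huL, hLL'.subset huL]
      · by_cases huL' : u ∈ L' <;> simp [swL, huL, huL', hab u hus]
    · rw [hL't, hLt]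
      exact lt_of_le_of_ne (hab t hts) (fun h => hne (Fin.ext h).symm)
  · exact hne (by simpa [hLt, hL't] using htail t (not_lt.1 hts))

end swL

theorem path_with_distinct_variables_general (n s : ℕ) (r : Fin n → ℕ)
    (a b : Idx n r) (hab : ∀ j : Fin n, (j : ℕ) < s → (b j : ℕ) ≤ (a j : ℕ))
    (hd : 2 ≤ hammingDist a b) (i : Fin n) (hne : a i ≠ b i) :
    ∃ c : ℕ → Idx n r, c 0 = a ∧
      (∀ j < hammingDist a b - 2,
        hammingDist (c j) (c (j + 1)) = 1 ∧ c j i = c (j + 1) i) ∧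
      hammingDist (c (hammingDist a b - 2)) b = 2 ∧
      (∀ j ≤ hammingDist a b - 2, ∀ h ≤ hammingDist a b - 2, j ≠ h →
        ¬ sEquiv n s r (c j) (c h)) := by
  set d := hammingDist a b
  set Δ : Finset (Fin n) := {t | a t ≠ b t}
  have hΔ : #Δ = d := rfl
  have hiΔ : i ∈ Δ := by simpa [Δ] using hne
  obtain ⟨L, hmono, hLD, hcard⟩ := exists_monotone_subsets_card_eq (Δ.erase i)
  rw [card_erase_of_mem hiΔ, hΔ] at hcard
  have hLΔ : ∀ j, L j ⊆ Δ := fun j => (hLD j).trans (erase_subset i Δ)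
  have hΔne : ∀ t ∈ Δ, a t ≠ b t := fun t ht => by simpa [Δ] using ht
  have hiL : ∀ j, i ∉ L j := fun j hj => notMem_erase i Δ (hLD j hj)
  refine ⟨fun j => swL (L j) a b, ?_, fun j hj => ⟨?_, ?_⟩, ?_, ?_⟩ <;> beta_reduce
  · rw [card_eq_zero.1 (hcard 0 (Nat.zero_le _)), swL_empty]
  · rw [hammingDist_swL_swL (hmono j.le_succ) (fun t ht => hΔne t (hLΔ _ ht)),
      hcard _ (by omega), hcard _ (by omega)]
    omega
  · rw [swL_apply_of_notMem (hiL j), swL_apply_of_notMem (hiL (j + 1))]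
  · calc hammingDist (swL (L (d - 2)) a b) b
          = hammingDist (swL (L (d - 2)) a b) (swL Δ a b) := by rw [swL_filter_ne]
      _ = #Δ - #(L (d - 2)) := hammingDist_swL_swL (hLΔ _) hΔne
      _ = 2 := by rw [hcard _ (by omega), hΔ]; omega
  · have key : ∀ {j h}, j < h → h ≤ d - 2 →
        ¬ sEquiv n s r (swL (L j) a b) (swL (L h) a b) := fun hjh hh =>
      not_sEquiv_swL_of_ssubset hab
        (ssubset_of_subset_of_ne (hmono hjh.le) fun hL => by
          have := congrArg card hL
          rw [hcard _ (by omega), hcard _ (by omega)] at this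
          omega)
        (fun t ht => hΔne t (hLΔ _ ht))
    intro j hj h hh hjh
    rcases lt_or_gt_of_ne hjh with hlt | hgt
    · exact key hlt hh
    · exact fun hE => key hgt hj hE.symm

/-- for `a, b` with `d(a,b) ≥ 2`, `a j ≥ b j` in the first `s` components,
and `i` with `a i ≠ b i`, there is a path `c 0 = a, …, c l` with `l = d(a,b) − 2`,
consecutive Hamming distance `1`, never differing in component `i`, `d(c l, b) = 2`, and
with no two distinct members `s`-equivalent. -/
theorem path_with_distinct_variables (n s : ℕ) (r : Fin n → ℕ)
    (hs1 : 1 ≤ s) (hsn : s ≤ n) (hr : ∀ i, 2 ≤ r i)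
    (a b : Idx n r) (hab : ∀ j : Fin n, (j : ℕ) < s → (b j : ℕ) ≤ (a j : ℕ))
    (hd : 2 ≤ hammingDist a b) (i : Fin n) (hne : a i ≠ b i) :
    ∃ c : ℕ → Idx n r, c 0 = a ∧
      (∀ j < hammingDist a b - 2,
        hammingDist (c j) (c (j + 1)) = 1 ∧ c j i = c (j + 1) i) ∧
      hammingDist (c (hammingDist a b - 2)) b = 2 ∧
      (∀ j ≤ hammingDist a b - 2, ∀ h ≤ hammingDist a b - 2, j ≠ h →
        ¬ sEquiv n s r (c j) (c h)) :=
  path_with_distinct_variables_general n s r a b hab hd i hne
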